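/- arXiv:1810.03171 — 3 statements merged into one kernel-verified Lean document; each statement's English description precedes it below -/
import Mathlib

section
/- Let s ∈ (0,1), p ∈ (1,∞) and N > sp, and set p*_s = Np/(N−sp). Let (u_n) be a sequence of measurable functions on ℝ^N with sup_n (‖u_n‖_{L^p}^p + [u_n]_{s,p}^p) < ∞. If there exists R > 0 such that lim_{n→∞} sup_{y ∈ ℝ^N} ∫_{B_R(y)} |u_n|^p dx = 0, then ‖u_n‖_{L^t(ℝ^N)} → 0 for every t ∈ (p, p*_s). -/
open MeasureTheory Filter Topology
open scoped ENNReal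

noncomputable section

/-- Euclidean space `ℝ^N`. -/
abbrev Euc (N : ℕ) : Type := EuclideanSpace ℝ (Fin N)

/-- The `p`-th power of the Gagliardo seminorm `[u]_{s,p}^p`. -/
def gagliardoP (N : ℕ) (s p : ℝ) (u : Euc N → ℝ) : ℝ≥0∞ :=
  ∫⁻ x : Euc N, ∫⁻ y : Euc N,
    ENNReal.ofReal (|u x - u y| ^ p / ‖x - y‖ ^ ((N : ℝ) + s * p))

/-- The `p`-th power of the `L^p` norm, `‖u‖_{L^p}^p`. -/
def lpP (N : ℕ) (p : ℝ) (u : Euc N → ℝ) : ℝ≥0∞ :=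
  ∫⁻ x : Euc N, ENNReal.ofReal (|u x| ^ p)

open Set Metric

/-!
Hedberg-type argument. Averaging over a ball `B_r(x)` and Hölder's inequality give
`|u x| ≤ (|B_r|⁻¹ r^(N+sp) g(x))^(1/p) + (|B_r|⁻¹ ∫_{B_r(x)} |u|^τ)^(1/τ)`, where `g` is the inner
integral of the Gagliardo seminorm. If the `L^τ` masses of `u` on balls of radius `R` are at most
`v`, choosing `r` so that the second term is `l/2` and applying Chebyshev's inequality to `g` yield
the weak bound `|{|u| > l}| ≲ [u]^p v^(sp/N) l^(-q)`, `q = p + spτ/N`, at all levels `l` above a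
threshold that tends to `0` with `v`. The layer-cake formula, with the `L^p` bound at low levels,
then makes `‖u‖_t` small for `p < t < q`. So vanishing local `L^τ` masses give vanishing `L^t`
norms for `t < p + spτ/N`, hence vanishing local `L^t` masses, and iterating `τ ↦ p + spτ/N`
from `τ = p` reaches every `t` below its fixed point `Np/(N - sp)`.
-/

theorem inv_mul_setLIntegral_le_rpow {α : Type*} [MeasurableSpace α] {μ : Measure α}
    {B : Set α} (hB0 : μ B ≠ 0) (hBt : μ B ≠ ⊤) {g : α → ℝ≥0∞} (hg : AEMeasurable g (μ.restrict B))
    {p : ℝ} (hp : 1 < p) :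
    (μ B)⁻¹ * ∫⁻ z in B, g z ∂μ ≤ ((μ B)⁻¹ * ∫⁻ z in B, g z ^ p ∂μ) ^ p⁻¹ := by
  have hpq := Real.HolderConjugate.conjExponent hp
  have holder : ∫⁻ z in B, g z ∂μ ≤
      (∫⁻ z in B, g z ^ p ∂μ) ^ p⁻¹ * μ B ^ (p.conjExponent)⁻¹ := by
    simpa using ENNReal.lintegral_mul_le_Lp_mul_Lq _ hpq hg (aemeasurable_const (b := 1))
  calc (μ B)⁻¹ * ∫⁻ z in B, g z ∂μ
      ≤ (μ B)⁻¹ * ((∫⁻ z in B, g z ^ p ∂μ) ^ p⁻¹ * μ B ^ (p.conjExponent)⁻¹) := by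
        gcongr
    _ = ((μ B)⁻¹ * ∫⁻ z in B, g z ^ p ∂μ) ^ p⁻¹ := by
        rw [ENNReal.mul_rpow_of_nonneg _ _ (by positivity), ← hpq.one_sub_inv,
          ENNReal.rpow_sub _ _ hB0 hBt, ENNReal.rpow_one, ENNReal.inv_rpow, div_eq_mul_inv,
          mul_left_comm, ENNReal.inv_mul_cancel_left hB0 hBt, mul_comm]

theorem ofReal_abs_le_rpow_setLIntegral_add {α : Type*} [MeasurableSpace α] {μ : Measure α}
    {B : Set α} (hB0 : μ B ≠ 0) (hBt : μ B ≠ ⊤) {f : α → ℝ} (hf : Measurable f) (a : ℝ)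
    {p τ : ℝ} (hp : 1 < p) (hτ : 1 < τ) :
    ENNReal.ofReal |a| ≤
      ((μ B)⁻¹ * ∫⁻ z in B, ENNReal.ofReal (|a - f z| ^ p) ∂μ) ^ p⁻¹
        + ((μ B)⁻¹ * ∫⁻ z in B, ENNReal.ofReal (|f z| ^ τ) ∂μ) ^ τ⁻¹ := by
  have hsplit : ∀ z, ENNReal.ofReal |a| ≤ ENNReal.ofReal |a - f z| + ENNReal.ofReal |f z| :=
    fun z => by
      rw [← ENNReal.ofReal_add (abs_nonneg _) (abs_nonneg _)]
      exact ENNReal.ofReal_le_ofReal (by simpa using abs_add_le (a - f z) (f z))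
  have hpow : ∀ {e : ℝ}, 0 < e → ∀ x : ℝ, ENNReal.ofReal (|x| ^ e) = ENNReal.ofReal |x| ^ e :=
    fun he x => (ENNReal.ofReal_rpow_of_nonneg (abs_nonneg x) he.le).symm
  simp_rw [hpow (one_pos.trans hp), hpow (one_pos.trans hτ)]
  calc ENNReal.ofReal |a| = (μ B)⁻¹ * ∫⁻ _ in B, ENNReal.ofReal |a| ∂μ := by
        rw [setLIntegral_const, mul_comm _ (μ B), ENNReal.inv_mul_cancel_left hB0 hBt]
    _ ≤ (μ B)⁻¹ * ∫⁻ z in B, ENNReal.ofReal |a - f z| ∂μ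
          + (μ B)⁻¹ * ∫⁻ z in B, ENNReal.ofReal |f z| ∂μ := by
        rw [← mul_add, ← lintegral_add_right _ hf.abs.ennreal_ofReal]
        gcongr with z
        exact hsplit z
    _ ≤ _ := add_le_add
        (inv_mul_setLIntegral_le_rpow hB0 hBt (hf.const_sub a).abs.ennreal_ofReal.aemeasurable hp)
        (inv_mul_setLIntegral_le_rpow hB0 hBt hf.abs.ennreal_ofReal.aemeasurable hτ)

theorem lintegral_Ioc_ofReal_rpow {A c : ℝ} (hA : 0 < A) (hc : -1 < c) :
    ∫⁻ l in Ioc 0 A, ENNReal.ofReal (l ^ c) = ENNReal.ofReal (A ^ (c + 1) / (c + 1)) := by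
  rw [← ofReal_integral_eq_lintegral_ofReal]
  · rw [← intervalIntegral.integral_of_le hA.le, integral_rpow (Or.inl hc),
      Real.zero_rpow (by linarith), sub_zero]
  · exact (intervalIntegrable_iff_integrableOn_Ioc_of_le hA.le).1
      (intervalIntegral.intervalIntegrable_rpow' hc)
  · filter_upwards [self_mem_ae_restrict measurableSet_Ioc] with l hl
    exact Real.rpow_nonneg hl.1.le _

theorem lintegral_Ioi_ofReal_rpow {A c : ℝ} (hA : 0 < A) (hc : c < -1) :
    ∫⁻ l in Ioi A, ENNReal.ofReal (l ^ c) = ENNReal.ofReal (A ^ (c + 1) / (-c - 1)) := by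
  rw [← ofReal_integral_eq_lintegral_ofReal (integrableOn_Ioi_rpow_of_lt hc hA),
    integral_Ioi_rpow_of_lt hc hA, neg_div, ← div_neg, neg_add', sub_eq_add_neg]
  filter_upwards [self_mem_ae_restrict measurableSet_Ioi] with l hl
  exact Real.rpow_nonneg (hA.trans hl).le _

section LayerCake

variable {α : Type*} [MeasurableSpace α] {μ : Measure α} {f : α → ℝ}

theorem meas_lt_abs_le_lintegral_mul_rpow_neg (hf : AEMeasurable f μ) {p : ℝ} (hp : 0 < p)
    {l : ℝ} (hl : 0 < l) :
    μ {x | l < |f x|} ≤ (∫⁻ x, ENNReal.ofReal (|f x| ^ p) ∂μ) * ENNReal.ofReal (l ^ (-p)) := by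
  have hsub : {x | l < |f x|} ⊆ {x | ENNReal.ofReal (l ^ p) ≤ ENNReal.ofReal (|f x| ^ p)} :=
    fun x hx => ENNReal.ofReal_le_ofReal (Real.rpow_le_rpow hl.le (le_of_lt hx) hp.le)
  calc μ {x | l < |f x|} ≤ (∫⁻ x, ENNReal.ofReal (|f x| ^ p) ∂μ) / ENNReal.ofReal (l ^ p) :=
        (measure_mono hsub).trans (meas_ge_le_lintegral_div (by fun_prop) (by positivity)
          ENNReal.ofReal_ne_top)
    _ = (∫⁻ x, ENNReal.ofReal (|f x| ^ p) ∂μ) * ENNReal.ofReal (l ^ (-p)) := by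
        rw [div_eq_mul_inv, Real.rpow_neg hl.le, ENNReal.ofReal_inv_of_pos (by positivity)]

theorem setLIntegral_meas_lt_mul_rpow_le {I : Set ℝ} (hI : MeasurableSet I) (hI0 : I ⊆ Ioi 0)
    {C : ℝ≥0∞} {e t : ℝ} (hC : ∀ l ∈ I, μ {x | l < |f x|} ≤ C * ENNReal.ofReal (l ^ (-e))) :
    ∫⁻ l in I, μ {x | l < |f x|} * ENNReal.ofReal (l ^ (t - 1)) ≤
      C * ∫⁻ l in I, ENNReal.ofReal (l ^ (t - 1 - e)) := by
  rw [← lintegral_const_mul _ (by fun_prop)]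
  refine setLIntegral_mono' hI fun l hl => ?_
  have hl0 : 0 < l := hI0 hl
  calc μ {x | l < |f x|} * ENNReal.ofReal (l ^ (t - 1))
      ≤ C * ENNReal.ofReal (l ^ (-e)) * ENNReal.ofReal (l ^ (t - 1)) := by gcongr; exact hC l hl
    _ = C * ENNReal.ofReal (l ^ (t - 1 - e)) := by
        rw [mul_assoc, ← ENNReal.ofReal_mul (by positivity), ← Real.rpow_add hl0]
        ring_nf

theorem lintegral_rpow_le_of_meas_lt_le (hf : AEMeasurable f μ) {p t q Λ : ℝ} (hp : 0 < p)
    (hpt : p < t) (htq : t < q) (hΛ : 0 < Λ) {K M : ℝ≥0∞}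
    (hK : ∀ l, 0 < l → μ {x | l < |f x|} ≤ K * ENNReal.ofReal (l ^ (-p)))
    (hM : ∀ l, Λ ≤ l → μ {x | l < |f x|} ≤ M * ENNReal.ofReal (l ^ (-q))) :
    ∫⁻ x, ENNReal.ofReal (|f x| ^ t) ∂μ ≤ ENNReal.ofReal t *
      (K * ENNReal.ofReal (Λ ^ (t - p) / (t - p))
        + M * ENNReal.ofReal (Λ ^ (t - q) / (q - t))) := by
  rw [lintegral_rpow_eq_lintegral_meas_lt_mul μ (ae_of_all _ fun x => abs_nonneg (f x))
      hf.abs (hp.trans hpt), ← Ioc_union_Ioi_eq_Ioi hΛ.le,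
    lintegral_union measurableSet_Ioi (Ioc_disjoint_Ioi le_rfl)]
  gcongr
  · refine (setLIntegral_meas_lt_mul_rpow_le measurableSet_Ioc (fun l hl => hl.1)
      fun l hl => hK l hl.1).trans_eq ?_
    rw [lintegral_Ioc_ofReal_rpow hΛ (by linarith)]
    ring_nf
  · refine (setLIntegral_meas_lt_mul_rpow_le measurableSet_Ioi
      (fun l hl => hΛ.trans hl) fun l hl => hM l (le_of_lt hl)).trans_eq ?_
    rw [lintegral_Ioi_ofReal_rpow hΛ (by linarith)]
    ring_nf

end LayerCake

theorem tendsto_const_mul_rpow_nhdsGT_zero (c : ℝ) {e : ℝ} (he : 0 < e) :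
    Tendsto (fun x : ℝ => c * x ^ e) (𝓝[>] 0) (𝓝 0) := by
  have h := ((Real.continuous_rpow_const he.le).tendsto 0).const_mul c
  rw [Real.zero_rpow he.ne', mul_zero] at h
  exact h.mono_left nhdsWithin_le_nhds

/-- `L = p / (1 - a)` is the fixed point of `τ ↦ p + a τ`, and `L - a^k (L - p)` is its `k`-th
iterate from `p`. -/
theorem Ioo_subset_of_forall_Ioo_subset {S : Set ℝ} {p a : ℝ} (ha0 : 0 < a)
    (ha1 : a < 1) (hstep : ∀ τ ∈ insert p S, Ioo p (p + a * τ) ⊆ S) :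
    Ioo p (p / (1 - a)) ⊆ S := by
  set L := p / (1 - a)
  set q : ℕ → ℝ := fun k => L - a ^ k * (L - p)
  have hfix : p + a * L = L := by
    simp only [L]; field_simp [(by linarith : 1 - a ≠ 0)]; ring
  have hq_succ : ∀ k, q (k + 1) = p + a * q k := fun k => by
    simp only [q, pow_succ]; linear_combination -hfix
  have hreach : ∀ k, Ioo p (q (k + 1)) ⊆ S := by
    intro k
    induction k with
    | zero => simpa [hq_succ, q] using hstep p (mem_insert _ _)
    | succ k ih =>
      intro t ht
      rcases lt_or_ge t (p + a * p) with hsmall | hlarge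
      · exact hstep p (mem_insert _ _) ⟨ht.1, hsmall⟩
      have hlow : p ≤ (t - p) / a := by rw [le_div_iff₀ ha0]; linarith
      have hhigh : (t - p) / a < q (k + 1) := by
        rw [div_lt_iff₀ ha0]; have := ht.2; rw [hq_succ] at this; linarith
      refine hstep (((t - p) / a + q (k + 1)) / 2) (mem_insert_of_mem _ (ih ⟨by linarith,
        by linarith⟩)) ⟨ht.1, ?_⟩
      have : t - p < a * (((t - p) / a + q (k + 1)) / 2) := by
        rw [← div_lt_iff₀' ha0]; linarith
      linarith
  intro t ht
  have hgeom : Tendsto (fun k => a ^ (k + 1) * (L - p)) atTop (𝓝 0) := by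
    simpa using ((tendsto_pow_atTop_nhds_zero_of_lt_one ha0.le ha1).comp
      (tendsto_add_atTop_nat 1)).mul_const (L - p)
  obtain ⟨k, hk⟩ := (hgeom.eventually_lt_const (sub_pos.2 ht.2)).exists
  exact hreach k ⟨ht.1, by simp only [q]; linarith⟩

theorem tendsto_iSup_setLIntegral_of_tendsto_lintegral {α ι κ : Type*} [MeasurableSpace α]
    {μ : Measure α} {l : Filter ι} {F : ι → α → ℝ≥0∞} (s : κ → Set α)
    (h : Tendsto (fun n => ∫⁻ x, F n x ∂μ) l (𝓝 0)) :
    Tendsto (fun n => ⨆ k, ∫⁻ x in s k, F n x ∂μ) l (𝓝 0) :=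
  tendsto_of_tendsto_of_tendsto_of_le_of_le tendsto_const_nhds h (fun _ => zero_le)
    fun _ => iSup_le fun _ => setLIntegral_le_lintegral _ _

theorem eLpNorm_ofReal_eq_lintegral_rpow {α : Type*} [MeasurableSpace α] {μ : Measure α}
    (f : α → ℝ) {t : ℝ} (ht : 0 < t) :
    eLpNorm f (ENNReal.ofReal t) μ = (∫⁻ x, ENNReal.ofReal (|f x| ^ t) ∂μ) ^ t⁻¹ := by
  rw [eLpNorm_eq_lintegral_rpow_enorm_toReal (by simpa using ht) ENNReal.ofReal_ne_top,
    ENNReal.toReal_ofReal ht.le, one_div]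
  simp_rw [Real.enorm_eq_ofReal_abs, ENNReal.ofReal_rpow_of_nonneg (abs_nonneg _) ht.le]

def gagliardoDensity (N : ℕ) (s p : ℝ) (u : Euc N → ℝ) (x : Euc N) : ℝ≥0∞ :=
  ∫⁻ z, ENNReal.ofReal (|u x - u z| ^ p / ‖x - z‖ ^ ((N : ℝ) + s * p))

theorem lintegral_gagliardoDensity (N : ℕ) (s p : ℝ) (u : Euc N → ℝ) :
    ∫⁻ x, gagliardoDensity N s p u x = gagliardoP N s p u := rfl

theorem measurable_gagliardoDensity {N : ℕ} {s p : ℝ} {u : Euc N → ℝ} (hu : Measurable u) :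
    Measurable (gagliardoDensity N s p u) := by
  refine Measurable.lintegral_prod_right (f := fun x z =>
    ENNReal.ofReal (|u x - u z| ^ p / ‖x - z‖ ^ ((N : ℝ) + s * p))) ?_
  fun_prop

theorem setLIntegral_ball_le_gagliardoDensity {N : ℕ} {s p : ℝ} (hs : 0 ≤ s) (hp : 0 < p)
    (u : Euc N → ℝ) (x : Euc N) {r : ℝ} (hr : 0 < r) :
    ∫⁻ z in ball x r, ENNReal.ofReal (|u x - u z| ^ p) ≤
      ENNReal.ofReal (r ^ ((N : ℝ) + s * p)) * gagliardoDensity N s p u x := by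
  set e := (N : ℝ) + s * p
  have he : 0 ≤ e := by positivity
  have hpt : ∀ z ∈ ball x r, ENNReal.ofReal (|u x - u z| ^ p) ≤
      ENNReal.ofReal (r ^ e) * ENNReal.ofReal (|u x - u z| ^ p / ‖x - z‖ ^ e) := by
    intro z hz
    rw [← ENNReal.ofReal_mul (by positivity)]
    refine ENNReal.ofReal_le_ofReal ?_
    rcases eq_or_ne z x with rfl | hzx
    · simp [Real.zero_rpow hp.ne']
    have hd : 0 < ‖x - z‖ := norm_pos_iff.2 (sub_ne_zero.2 hzx.symm)
    have hdr : ‖x - z‖ ≤ r := by rw [← dist_eq_norm, dist_comm]; exact (mem_ball.1 hz).le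
    calc |u x - u z| ^ p = ‖x - z‖ ^ e * (|u x - u z| ^ p / ‖x - z‖ ^ e) := by
          field_simp
      _ ≤ r ^ e * (|u x - u z| ^ p / ‖x - z‖ ^ e) := by gcongr
  calc ∫⁻ z in ball x r, ENNReal.ofReal (|u x - u z| ^ p)
      ≤ ∫⁻ z in ball x r, ENNReal.ofReal (r ^ e) *
          ENNReal.ofReal (|u x - u z| ^ p / ‖x - z‖ ^ e) :=
        setLIntegral_mono' measurableSet_ball hpt
    _ = ENNReal.ofReal (r ^ e) *
          ∫⁻ z in ball x r, ENNReal.ofReal (|u x - u z| ^ p / ‖x - z‖ ^ e) :=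
        lintegral_const_mul' _ _ ENNReal.ofReal_ne_top
    _ ≤ ENNReal.ofReal (r ^ e) * gagliardoDensity N s p u x := by
        gcongr; exact setLIntegral_le_lintegral _ _

theorem ofReal_abs_le_gagliardoDensity_add {N : ℕ} {s p τ : ℝ} (hs : 0 ≤ s) (hp : 1 < p)
    (hτ : 1 < τ) {u : Euc N → ℝ} (hu : Measurable u) (x : Euc N) {r : ℝ} (hr : 0 < r) :
    ENNReal.ofReal |u x| ≤
      ((volume (ball x r))⁻¹ * ENNReal.ofReal (r ^ ((N : ℝ) + s * p)) *
          gagliardoDensity N s p u x) ^ p⁻¹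
        + ((volume (ball x r))⁻¹ * ∫⁻ z in ball x r, ENNReal.ofReal (|u z| ^ τ)) ^ τ⁻¹ := by
  refine (ofReal_abs_le_rpow_setLIntegral_add (measure_ball_pos _ x hr).ne'
    (measure_ball_lt_top (μ := volume)).ne hu (u x) hp hτ).trans ?_
  rw [mul_assoc]
  gcongr
  exact setLIntegral_ball_le_gagliardoDensity hs (one_pos.trans hp) u x hr

theorem volume_lt_abs_le_of_setLIntegral_ball_le_mul {N : ℕ} {s p τ : ℝ} (hs : 0 ≤ s)
    (hp : 1 < p) (hτ : 1 < τ) {u : Euc N → ℝ} (hu : Measurable u) {r l : ℝ} (hr : 0 < r)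
    (hl : 0 < l)
    (hV : ∀ x, ∫⁻ z in ball x r, ENNReal.ofReal (|u z| ^ τ) ≤
      volume (ball x r) * ENNReal.ofReal (l / 2) ^ τ) :
    volume {x | l < |u x|} ≤
      (volume (ball (0 : Euc N) r))⁻¹ * ENNReal.ofReal (r ^ ((N : ℝ) + s * p)) *
        gagliardoP N s p u / ENNReal.ofReal (l / 2) ^ p := by
  set C := (volume (ball (0 : Euc N) r))⁻¹ * ENNReal.ofReal (r ^ ((N : ℝ) + s * p))
  set w := ENNReal.ofReal (l / 2) ^ p
  have hm0 : volume (ball (0 : Euc N) r) ≠ 0 := (measure_ball_pos _ _ hr).ne'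
  have hmt : volume (ball (0 : Euc N) r) ≠ ⊤ := measure_ball_lt_top.ne
  have hsub : {x | l < |u x|} ⊆ {x | w ≤ C * gagliardoDensity N s p u x} := by
    intro x hx
    have hlocal : ((volume (ball (0 : Euc N) r))⁻¹ *
        ∫⁻ z in ball x r, ENNReal.ofReal (|u z| ^ τ)) ^ τ⁻¹ ≤ ENNReal.ofReal (l / 2) := by
      rw [ENNReal.rpow_inv_le_iff (by linarith), ENNReal.inv_mul_le_iff hm0 hmt,
        ← Measure.addHaar_ball_center volume x r]
      exact hV x
    have hpointwise := ofReal_abs_le_gagliardoDensity_add hs hp hτ hu x hr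
    rw [Measure.addHaar_ball_center volume x r] at hpointwise
    have hx' : ENNReal.ofReal (l / 2) + ENNReal.ofReal (l / 2) ≤
        (C * gagliardoDensity N s p u x) ^ p⁻¹ + ENNReal.ofReal (l / 2) := by
      rw [← ENNReal.ofReal_add (by positivity) (by positivity), add_halves]
      exact (ENNReal.ofReal_le_ofReal hx.le).trans (hpointwise.trans (add_le_add le_rfl hlocal))
    exact (ENNReal.le_rpow_inv_iff (by linarith)).1
      (ENNReal.le_of_add_le_add_right ENNReal.ofReal_ne_top hx')
  have hw0 : w ≠ 0 := by positivity
  have hwt : w ≠ ⊤ := by simp [w, (by linarith : (0 : ℝ) ≤ p)]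
  calc volume {x | l < |u x|} ≤ volume {x | w ≤ C * gagliardoDensity N s p u x} :=
        measure_mono hsub
    _ ≤ (∫⁻ x, C * gagliardoDensity N s p u x) / w :=
        meas_ge_le_lintegral_div ((measurable_gagliardoDensity hu).const_mul C).aemeasurable hw0 hwt
    _ = C * gagliardoP N s p u / w := by
        rw [lintegral_const_mul _ (measurable_gagliardoDensity hu), lintegral_gagliardoDensity]

def unitBallVolume (N : ℕ) : ℝ := (volume (ball (0 : Euc N) 1)).toReal

theorem unitBallVolume_pos (N : ℕ) : 0 < unitBallVolume N :=
  ENNReal.toReal_pos (measure_ball_pos _ _ one_pos).ne' measure_ball_lt_top.ne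

theorem volume_ball_eq_ofReal {N : ℕ} (x : Euc N) {r : ℝ} (hr : 0 < r) :
    volume (ball x r) = ENNReal.ofReal (unitBallVolume N * r ^ N) := by
  rw [Measure.addHaar_ball_of_pos _ _ hr, finrank_euclideanSpace_fin, mul_comm,
    ENNReal.ofReal_mul (unitBallVolume_pos N).le, unitBallVolume,
    ENNReal.ofReal_toReal measure_ball_lt_top.ne]

/-- The radius `r` is chosen so that `|B_r| (l/2)^τ = v`; the hypothesis `hlR` says `r ≤ R`. -/
theorem volume_lt_abs_le_rpow_of_setLIntegral_ball_le {N : ℕ} (hN : N ≠ 0) {s p τ : ℝ}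
    (hs : 0 ≤ s) (hp : 1 < p) (hτ : 1 < τ) {u : Euc N → ℝ} (hu : Measurable u) {R v : ℝ}
    (hR : 0 < R) (hv : 0 < v)
    (hV : ∀ y, ∫⁻ z in ball y R, ENNReal.ofReal (|u z| ^ τ) ≤ ENNReal.ofReal v)
    {l : ℝ} (hl : 0 < l) (hlR : v * (2 / l) ^ τ ≤ unitBallVolume N * R ^ N) :
    volume {x | l < |u x|} ≤ gagliardoP N s p u * ENNReal.ofReal ((unitBallVolume N)⁻¹ *
      (v / unitBallVolume N) ^ (s * p / N) * (2 / l) ^ (p + s * p / N * τ)) := by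
  set ω := unitBallVolume N
  have hω : 0 < ω := unitBallVolume_pos N
  set A := v * (2 / l) ^ τ / ω
  have hA : 0 < A := by positivity
  set r := A ^ (N⁻¹ : ℝ)
  have hr : 0 < r := by positivity
  have hrN : r ^ N = A := Real.rpow_inv_natCast_pow hA.le hN
  have hball : ∀ x : Euc N, volume (ball x r) = ENNReal.ofReal (v * (2 / l) ^ τ) := by
    intro x
    rw [volume_ball_eq_ofReal x hr, hrN, mul_div_cancel₀ _ hω.ne']
  have hrR : r ≤ R := by
    rw [← pow_le_pow_iff_left₀ hr.le hR.le hN, hrN, div_le_iff₀ hω, mul_comm _ ω]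
    exact hlR
  have hVr : ∀ x, ∫⁻ z in ball x r, ENNReal.ofReal (|u z| ^ τ) ≤
      volume (ball x r) * ENNReal.ofReal (l / 2) ^ τ := by
    intro x
    rw [hball, ENNReal.ofReal_rpow_of_nonneg (by positivity) (by linarith),
      ← ENNReal.ofReal_mul (by positivity), mul_assoc, ← Real.mul_rpow (by positivity)
        (by positivity), show 2 / l * (l / 2) = 1 by field_simp, Real.one_rpow, mul_one]
    exact (lintegral_mono_set (ball_subset_ball hrR)).trans (hV x)
  refine (volume_lt_abs_le_of_setLIntegral_ball_le_mul hs hp hτ hu hr hl hVr).trans (le_of_eq ?_)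
  have hreal : (v * (2 / l) ^ τ)⁻¹ * r ^ ((N : ℝ) + s * p) / (l / 2) ^ p =
      ω⁻¹ * (v / ω) ^ (s * p / N) * (2 / l) ^ (p + s * p / N * τ) := by
    have hrpow : r ^ ((N : ℝ) + s * p) =
        A * ((v / ω) ^ (s * p / N) * (2 / l) ^ (s * p * τ / N)) := by
      rw [Real.rpow_add hr, Real.rpow_natCast, hrN, ← Real.rpow_mul hA.le,
        show A = v / ω * (2 / l) ^ τ by ring, Real.mul_rpow (by positivity) (by positivity),
        ← Real.rpow_mul (by positivity)]
      ring_nf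
    have hinv : ∀ e : ℝ, (2 / l) ^ e = ((l / 2) ^ e)⁻¹ := fun e => by
      rw [← Real.inv_rpow (by positivity), inv_div]
    rw [hrpow, Real.rpow_add (by positivity)]
    simp only [A, hinv p, hinv τ]
    field_simp
  rw [hball, ← ENNReal.ofReal_inv_of_pos (by positivity),
    ENNReal.ofReal_rpow_of_nonneg (by positivity) (by linarith),
    ← ENNReal.ofReal_mul (by positivity), mul_comm _ (gagliardoP N s p u), mul_div_assoc,
    ← ENNReal.ofReal_div_of_pos (by positivity), hreal]

theorem lintegral_rpow_le_of_setLIntegral_ball_le {N : ℕ} (hN : N ≠ 0) {s p τ q t : ℝ}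
    (hs : 0 ≤ s) (hp : 1 < p) (hτ : 1 < τ) (hq : q = p + s * p / N * τ) (hpt : p < t)
    (htq : t < q) {u : Euc N → ℝ} (hu : Measurable u) {R v Λ : ℝ} (hR : 0 < R) (hv : 0 < v)
    (hΛ : 0 < Λ) (hV : ∀ y, ∫⁻ z in ball y R, ENNReal.ofReal (|u z| ^ τ) ≤ ENNReal.ofReal v)
    (hΛR : v * (2 / Λ) ^ τ ≤ unitBallVolume N * R ^ N) :
    ∫⁻ x, ENNReal.ofReal (|u x| ^ t) ≤ ENNReal.ofReal t *
      (lpP N p u * ENNReal.ofReal (Λ ^ (t - p) / (t - p)) + gagliardoP N s p u *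
        ENNReal.ofReal ((unitBallVolume N)⁻¹ * (v / unitBallVolume N) ^ (s * p / N) * 2 ^ q *
          (Λ ^ (t - q) / (q - t)))) := by
  subst hq
  set q := p + s * p / N * τ
  set C := (unitBallVolume N)⁻¹ * (v / unitBallVolume N) ^ (s * p / N) * 2 ^ q
  have hC : 0 ≤ C := by have := unitBallVolume_pos N; positivity
  have hweak : ∀ l, Λ ≤ l → volume {x | l < |u x|} ≤
      gagliardoP N s p u * ENNReal.ofReal C * ENNReal.ofReal (l ^ (-q)) := by
    intro l hl
    have hl0 : 0 < l := hΛ.trans_le hl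
    have hlR : v * (2 / l) ^ τ ≤ unitBallVolume N * R ^ N :=
      le_trans (by gcongr) hΛR
    refine (volume_lt_abs_le_rpow_of_setLIntegral_ball_le hN hs hp hτ hu hR hv hV hl0
      hlR).trans_eq ?_
    rw [mul_assoc _ (ENNReal.ofReal C), ← ENNReal.ofReal_mul hC, Real.div_rpow zero_le_two hl0.le,
      Real.rpow_neg hl0.le]
    simp only [C, q]
    ring_nf
  refine (lintegral_rpow_le_of_meas_lt_le hu.aemeasurable (one_pos.trans hp) hpt htq hΛ
    (fun l hl => meas_lt_abs_le_lintegral_mul_rpow_neg hu.aemeasurable (one_pos.trans hp) hl)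
    hweak).trans_eq ?_
  rw [lpP, mul_assoc (gagliardoP N s p u), ← ENNReal.ofReal_mul hC]

theorem exists_pos_forall_lintegral_rpow_le {N : ℕ} (hN : N ≠ 0) {s p τ t : ℝ} (hs : 0 ≤ s)
    (hp : 1 < p) (hτ : 1 < τ) (hpt : p < t) (htq : t < p + s * p / N * τ) {R : ℝ} (hR : 0 < R)
    {K Γ : ℝ≥0∞} (hK : K ≠ ⊤) (hΓ : Γ ≠ ⊤) {ε : ℝ≥0∞} (hε : 0 < ε) :
    ∃ v > 0, ∀ u : Euc N → ℝ, Measurable u → lpP N p u ≤ K → gagliardoP N s p u ≤ Γ →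
      (∀ y, ∫⁻ z in ball y R, ENNReal.ofReal (|u z| ^ τ) ≤ ENNReal.ofReal v) →
      ∫⁻ x, ENNReal.ofReal (|u x| ^ t) ≤ ε := by
  set ω := unitBallVolume N
  have hω : 0 < ω := unitBallVolume_pos N
  set a := s * p / N
  set q := p + a * τ
  -- Parametrize by the splitting level `Λ` and take `v = Λ^(2τ)`: then both `Λ → 0` and
  -- `v^(sp/N) Λ^(t-q) → 0`, and the weak bound holds above `Λ` for small `Λ`.
  have hg1 : Tendsto (fun Λ : ℝ => Λ ^ (t - p) / (t - p)) (𝓝[>] 0) (𝓝 0) := by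
    simpa only [div_eq_inv_mul] using tendsto_const_mul_rpow_nhdsGT_zero (t - p)⁻¹
      (sub_pos.2 hpt)
  have hg2 : Tendsto (fun Λ : ℝ => ω⁻¹ * (Λ ^ (2 * τ) / ω) ^ a * 2 ^ q * (Λ ^ (t - q) / (q - t)))
      (𝓝[>] 0) (𝓝 0) := by
    refine (tendsto_const_mul_rpow_nhdsGT_zero (ω⁻¹ / ω ^ a * 2 ^ q / (q - t))
      (by nlinarith : 0 < 2 * τ * a + (t - q))).congr' (eventually_nhdsWithin_of_forall
      fun Λ (hΛ : 0 < Λ) => ?_)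
    dsimp only
    rw [Real.div_rpow (by positivity) hω.le, ← Real.rpow_mul hΛ.le, Real.rpow_add hΛ]
    ring
  have hg3 : Tendsto (fun Λ : ℝ => Λ ^ (2 * τ) * (2 / Λ) ^ τ) (𝓝[>] 0) (𝓝 0) := by
    refine (tendsto_const_mul_rpow_nhdsGT_zero (2 ^ τ) (by linarith : 0 < τ)).congr'
      (eventually_nhdsWithin_of_forall fun Λ (hΛ : 0 < Λ) => ?_)
    dsimp only
    rw [Real.div_rpow zero_le_two hΛ.le, two_mul, Real.rpow_add hΛ]
    field_simp
  have hbound : Tendsto (fun Λ : ℝ => ENNReal.ofReal t *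
      (K * ENNReal.ofReal (Λ ^ (t - p) / (t - p)) +
        Γ * ENNReal.ofReal (ω⁻¹ * (Λ ^ (2 * τ) / ω) ^ a * 2 ^ q * (Λ ^ (t - q) / (q - t)))))
      (𝓝[>] 0) (𝓝 0) := by
    simpa using ENNReal.Tendsto.const_mul (a := ENNReal.ofReal t)
      ((ENNReal.Tendsto.const_mul (ENNReal.tendsto_ofReal hg1) (Or.inr hK)).add
        (ENNReal.Tendsto.const_mul (ENNReal.tendsto_ofReal hg2) (Or.inr hΓ)))
      (Or.inr ENNReal.ofReal_ne_top)
  obtain ⟨Λ, ⟨hsmall, hΛR⟩, hΛ⟩ := (((hbound.eventually_lt_const hε).and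
    (hg3.eventually_le_const (by positivity : 0 < ω * R ^ N))).and self_mem_nhdsWithin).exists
  refine ⟨Λ ^ (2 * τ), Real.rpow_pos_of_pos hΛ _, fun u hu hKu hΓu hV => ?_⟩
  refine (lintegral_rpow_le_of_setLIntegral_ball_le hN hs hp hτ rfl hpt htq hu hR
    (Real.rpow_pos_of_pos hΛ _) hΛ hV hΛR).trans (le_trans ?_ hsmall.le)
  gcongr

theorem tendsto_lintegral_rpow_of_tendsto_iSup_setLIntegral {N : ℕ} (hN : N ≠ 0) {s p τ t : ℝ}
    (hs : 0 ≤ s) (hp : 1 < p) (hτ : 1 < τ) (hpt : p < t) (htq : t < p + s * p / N * τ)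
    {R : ℝ} (hR : 0 < R) {K Γ : ℝ≥0∞} (hK : K ≠ ⊤) (hΓ : Γ ≠ ⊤) {u : ℕ → Euc N → ℝ}
    (hu : ∀ n, Measurable (u n)) (hKu : ∀ n, lpP N p (u n) ≤ K)
    (hΓu : ∀ n, gagliardoP N s p (u n) ≤ Γ)
    (hvan : Tendsto (fun n => ⨆ y : Euc N, ∫⁻ z in ball y R, ENNReal.ofReal (|u n z| ^ τ))
      atTop (𝓝 0)) :
    Tendsto (fun n => ∫⁻ x, ENNReal.ofReal (|u n x| ^ t)) atTop (𝓝 0) := by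
  refine ENNReal.tendsto_nhds_zero.2 fun ε hε => ?_
  obtain ⟨v, hv, hsmall⟩ :=
    exists_pos_forall_lintegral_rpow_le hN hs hp hτ hpt htq hR hK hΓ hε
  filter_upwards [hvan.eventually_le_const (ENNReal.ofReal_pos.2 hv)] with n hn
  exact hsmall (u n) (hu n) (hKu n) (hΓu n) fun y => (le_iSup_of_le y le_rfl).trans hn

theorem stmt_0_general {N : ℕ} {s p : ℝ} (hs0 : 0 < s) (hp : 1 < p)
    (hN : s * p < (N : ℝ))
    (u : ℕ → Euc N → ℝ) (hmeas : ∀ n, Measurable (u n))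
    (hbdd : (⨆ n, lpP N p (u n) + gagliardoP N s p (u n)) < ⊤)
    (R : ℝ) (hR : 0 < R)
    (hvan : Tendsto (fun n => ⨆ y : Euc N,
        ∫⁻ x in Metric.ball y R, ENNReal.ofReal (|u n x| ^ p)) atTop (nhds 0)) :
    ∀ t : ℝ, p < t → t < (N : ℝ) * p / ((N : ℝ) - s * p) →
      Tendsto (fun n => eLpNorm (u n) (ENNReal.ofReal t) volume) atTop (nhds 0) := by
  intro t hpt htL
  have hsp : 0 < s * p := by positivity
  have hN0 : N ≠ 0 := by rintro rfl; simp at hN; linarith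
  set M := ⨆ n, lpP N p (u n) + gagliardoP N s p (u n)
  have hlpP : ∀ n, lpP N p (u n) ≤ M := fun n => le_iSup_of_le n le_self_add
  have hgag : ∀ n, gagliardoP N s p (u n) ≤ M := fun n => le_iSup_of_le n le_add_self
  set S := {τ | p < τ ∧ Tendsto (fun n => ∫⁻ x, ENNReal.ofReal (|u n x| ^ τ)) atTop (𝓝 0)}
  have hstep : ∀ τ ∈ insert p S, Ioo p (p + s * p / N * τ) ⊆ S := by
    intro τ hτ t' ht'
    obtain ⟨hτ1, hτvan⟩ : 1 < τ ∧ Tendsto (fun n => ⨆ y : Euc N,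
        ∫⁻ z in ball y R, ENNReal.ofReal (|u n z| ^ τ)) atTop (𝓝 0) := by
      rcases hτ with rfl | hτ
      · exact ⟨hp, hvan⟩
      · exact ⟨hp.trans hτ.1, tendsto_iSup_setLIntegral_of_tendsto_lintegral _ hτ.2⟩
    exact ⟨ht'.1, tendsto_lintegral_rpow_of_tendsto_iSup_setLIntegral hN0 hs0.le hp hτ1 ht'.1
      ht'.2 hR hbdd.ne hbdd.ne hmeas hlpP hgag hτvan⟩
  have hL : (N : ℝ) * p / ((N : ℝ) - s * p) = p / (1 - s * p / N) := by
    have : (0 : ℝ) < N := hsp.trans hN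
    field_simp
  have ht : t ∈ S := Ioo_subset_of_forall_Ioo_subset (by positivity)
    ((div_lt_one (hsp.trans hN)).2 hN) hstep ⟨hpt, hL ▸ htL⟩
  simp_rw [eLpNorm_ofReal_eq_lintegral_rpow _ (one_pos.trans (hp.trans ht.1))]
  have hcont := ((ENNReal.continuous_rpow_const (y := t⁻¹)).tendsto 0).comp ht.2
  rwa [ENNReal.zero_rpow_of_pos (inv_pos.2 (one_pos.trans (hp.trans ht.1)))] at hcont

/-- Lions-type vanishing lemma (Lemma 2.1). -/
theorem stmt_0 {N : ℕ} {s p : ℝ} (hs0 : 0 < s) (hs1 : s < 1) (hp : 1 < p)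
    (hN : s * p < (N : ℝ))
    (u : ℕ → Euc N → ℝ) (hmeas : ∀ n, Measurable (u n))
    (hbdd : (⨆ n, lpP N p (u n) + gagliardoP N s p (u n)) < ⊤)
    (R : ℝ) (hR : 0 < R)
    (hvan : Tendsto (fun n => ⨆ y : Euc N,
        ∫⁻ x in Metric.ball y R, ENNReal.ofReal (|u n x| ^ p)) atTop (nhds 0)) :
    ∀ t : ℝ, p < t → t < (N : ℝ) * p / ((N : ℝ) - s * p) →
      Tendsto (fun n => eLpNorm (u n) (ENNReal.ofReal t) volume) atTop (nhds 0) :=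
  stmt_0_general hs0 hp hN u hmeas hbdd R hR hvan
end
end

section
/- Let s ∈ (0,1), p ∈ (1,∞), N > sp, and let p' = p/(p−1). For a measurable function u : ℝ^N → ℝ define A(u)(x,y) = |u(x)−u(y)|^{p−2}(u(x)−u(y)) / |x−y|^{(N+sp)/p'}. Let w satisfy [w]_{s,p} < ∞ and let (z_n) be a sequence with [z_n]_{s,p} ≤ C for all n and z_n → 0 almost everywhere in ℝ^N. Then ∬_{ℝ^N×ℝ^N} |A(z_n+w)(x,y) − A(z_n)(x,y) − A(w)(x,y)|^{p'} dx dy → 0 as n → ∞. -/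
/-!
Write `φ(t) = |t|^{p-2} t` and `D_u(x,y) = (u(x) - u(y)) / |x-y|^{(N+sp)/p}`. Then
`A(u) = φ ∘ D_u`, the Gagliardo seminorm `[u]_{s,p}^p` is the `L^p` norm of `D_u` on
`ℝ^N × ℝ^N`, and `D_u` is linear in `u`, so the claim is a Brezis–Lieb lemma for `φ`: if
`a_n → 0` a.e. stays bounded in `L^p` and `b ∈ L^p`, then
`∫ |φ(a_n + b) - φ(a_n) - φ(b)|^{p'} → 0`.

The defect `F(a,b) = φ(a+b) - φ(a) - φ(b)` is continuous, homogeneous of degree `p - 1` and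
vanishes on `b = 0`; normalising `(a,b)` and using compactness gives
`|F(a,b)|^{p'} ≤ ε |a|^p + K_ε |b|^p`. Hence `(|F(a_n,b)|^{p'} - ε |a_n|^p)^+` tends to `0` by
dominated convergence, and the rest is at most `ε sup_n ‖a_n‖_p^p`.
-/

open MeasureTheory Filter Topology
open scoped ENNReal

noncomputable section

/-- `A(u)(x,y) = |u(x)−u(y)|^{p−2}(u(x)−u(y)) / |x−y|^{(N+sp)/p'}`,
where `(N+sp)/p' = (N+sp)(p−1)/p`. -/
def Aop (N : ℕ) (s p : ℝ) (u : Euc N → ℝ) (x y : Euc N) : ℝ :=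
  |u x - u y| ^ (p - 2) * (u x - u y) / ‖x - y‖ ^ (((N : ℝ) + s * p) * (p - 1) / p)

open Set
open scoped NNReal

def signedRpow (p t : ℝ) : ℝ := |t| ^ (p - 2) * t

def signedRpowDefect (p a b : ℝ) : ℝ := signedRpow p (a + b) - signedRpow p a - signedRpow p b

section signedRpow

variable {p : ℝ}

@[simp]
lemma signedRpow_zero (p : ℝ) : signedRpow p 0 = 0 := by simp [signedRpow]

lemma abs_signedRpow (hp : p ≠ 1) (t : ℝ) : |signedRpow p t| = |t| ^ (p - 1) := by
  rcases eq_or_ne t 0 with rfl | ht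
  · simp [Real.zero_rpow (sub_ne_zero.2 hp)]
  · rw [signedRpow, abs_mul, abs_of_nonneg (by positivity),
      ← Real.rpow_add_one (abs_ne_zero.2 ht)]
    ring_nf

lemma signedRpow_mul {l : ℝ} (hl : 0 < l) (t : ℝ) :
    signedRpow p (l * t) = l ^ (p - 1) * signedRpow p t := by
  rw [signedRpow, signedRpow, abs_mul, abs_of_pos hl, Real.mul_rpow hl.le (abs_nonneg t),
    show p - 1 = p - 2 + 1 by ring, Real.rpow_add_one hl.ne']
  ring

lemma continuous_signedRpow (hp : 1 < p) : Continuous (signedRpow p) := by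
  refine continuous_iff_continuousAt.2 fun t => ?_
  rcases eq_or_ne t 0 with rfl | ht
  · have h : Tendsto (fun t : ℝ => |t| ^ (p - 1)) (𝓝 0) (𝓝 0) := by
      simpa [Real.zero_rpow (sub_pos.2 hp).ne'] using
        (continuous_abs.rpow_const fun _ => Or.inr (sub_pos.2 hp).le).tendsto 0
    rw [ContinuousAt, signedRpow_zero]
    exact squeeze_zero_norm (fun t => (abs_signedRpow hp.ne' t).le) h
  · exact (continuous_abs.continuousAt.rpow_const (Or.inl (abs_ne_zero.2 ht))).mul
      continuousAt_id

lemma signedRpowDefect_mul {l : ℝ} (hl : 0 < l) (a b : ℝ) :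
    signedRpowDefect p (l * a) (l * b) = l ^ (p - 1) * signedRpowDefect p a b := by
  simp only [signedRpowDefect, ← mul_add, signedRpow_mul hl]
  ring

@[simp]
lemma signedRpowDefect_zero_left (b : ℝ) : signedRpowDefect p 0 b = 0 := by
  simp [signedRpowDefect]

@[simp]
lemma signedRpowDefect_zero_right (a : ℝ) : signedRpowDefect p a 0 = 0 := by
  simp [signedRpowDefect]

lemma continuous_signedRpowDefect (hp : 1 < p) :
    Continuous fun z : ℝ × ℝ => signedRpowDefect p z.1 z.2 := by
  have h := continuous_signedRpow hp
  unfold signedRpowDefect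
  fun_prop

end signedRpow

theorem exists_le_mul_rpow_add_mul_rpow_of_homogeneous {G : ℝ × ℝ → ℝ} {r : ℝ}
    (hG : Continuous G) (hhom : ∀ l > 0, ∀ a b, G (l * a, l * b) = l ^ r * G (a, b))
    (hG0 : ∀ a, G (a, 0) = 0) {ε : ℝ} (hε : 0 < ε) :
    ∃ K ≥ 0, ∀ a b, G (a, b) ≤ ε * |a| ^ r + K * |b| ^ r := by
  obtain ⟨η, hη, hsmall⟩ : ∃ η > 0, ∀ u v, |u| ≤ 1 → |v| ≤ η → G (u, v) < ε := by
    have hsub : Icc (-1) 1 ×ˢ {0} ⊆ G ⁻¹' Iio ε := by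
      rintro ⟨u, v⟩ ⟨-, rfl : v = 0⟩
      simpa [hG0] using hε
    obtain ⟨η, hη, hη'⟩ :=
      (isCompact_Icc.prod isCompact_singleton).exists_cthickening_subset_open
        (isOpen_Iio.preimage hG) hsub
    refine ⟨η, hη, fun u v hu hv => hη' (Metric.mem_cthickening_of_dist_le (u, v) (u, 0) η _
      ⟨abs_le.1 hu, rfl⟩ ?_)⟩
    simpa [Prod.dist_eq] using hv
  obtain ⟨K, hK⟩ : ∃ K, ∀ u v, |u| ≤ η⁻¹ → |v| ≤ 1 → G (u, v) ≤ K := by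
    obtain ⟨K, hK⟩ := (isCompact_Icc.prod isCompact_Icc).bddAbove_image
      (K := Icc (-η⁻¹) η⁻¹ ×ˢ Icc (-1 : ℝ) 1) hG.continuousOn
    exact ⟨K, fun u v hu hv => hK ⟨(u, v), ⟨abs_le.1 hu, abs_le.1 hv⟩, rfl⟩⟩
  have hnorm : ∀ l > 0, ∀ a b, G (a, b) = l ^ r * G (a / l, b / l) := fun l hl a b => by
    rw [← hhom l hl, mul_div_cancel₀ _ hl.ne', mul_div_cancel₀ _ hl.ne']
  -- Normalise by `|a|` near the axis `b = 0`, where `G` is small, and by `|b|` away from it,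
  -- where `G` is bounded.
  refine ⟨max K 0, le_max_right _ _, fun a b => ?_⟩
  have hεa : 0 ≤ ε * |a| ^ r := by positivity
  have hKb : 0 ≤ max K 0 * |b| ^ r := by positivity
  rcases le_or_gt |b| (η * |a|) with hb | hb
  · rcases eq_or_ne a 0 with rfl | ha
    · obtain rfl : b = 0 := abs_nonpos_iff.1 (by simpa using hb)
      rw [hG0]
      positivity
    · have ha' := abs_pos.2 ha
      rw [hnorm _ ha']
      have := hsmall (a / |a|) (b / |a|) (by simp [abs_div, ha'.ne'])
        (by rwa [abs_div, abs_abs, div_le_iff₀ ha'])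
      nlinarith [Real.rpow_pos_of_pos ha' r]
  · have hb' : 0 < |b| := lt_of_le_of_lt (by positivity) hb
    rw [hnorm _ hb']
    have := hK (a / |b|) (b / |b|)
      (by rw [abs_div, abs_abs, div_le_iff₀ hb', inv_mul_eq_div, le_div_iff₀ hη]; linarith)
      (by simp [abs_div, hb'.ne'])
    nlinarith [Real.rpow_pos_of_pos hb' r, le_max_left K 0]

theorem tendsto_lintegral_zero_of_le_smul_add_smul {α : Type*} [MeasurableSpace α]
    {μ : Measure α} {g A : ℕ → α → ℝ≥0∞} {B : α → ℝ≥0∞} {C : ℝ≥0∞}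
    (hg : ∀ n, Measurable (g n)) (hA : ∀ n, Measurable (A n))
    (hAC : ∀ n, ∫⁻ x, A n x ∂μ ≤ C) (hC : C ≠ ∞) (hB : ∫⁻ x, B x ∂μ ≠ ∞)
    (hbound : ∀ ε : ℝ≥0, 0 < ε → ∃ K : ℝ≥0, ∀ n x, g n x ≤ ε * A n x + K * B x)
    (hlim : ∀ᵐ x ∂μ, Tendsto (fun n => g n x) atTop (𝓝 0)) :
    Tendsto (fun n => ∫⁻ x, g n x ∂μ) atTop (𝓝 0) := by
  refine ENNReal.tendsto_nhds_zero.2 fun ε hε => ?_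
  have hε2 : ε / 2 ≠ 0 := (ENNReal.half_pos hε.ne').ne'
  obtain ⟨δ, hδ, hδC⟩ := ENNReal.exists_nnreal_pos_mul_lt hC hε2
  obtain ⟨K, hK⟩ := hbound δ hδ
  have hKB : ∫⁻ x, K * B x ∂μ ≠ ∞ := by
    rw [lintegral_const_mul' _ _ ENNReal.coe_ne_top]
    exact ENNReal.mul_ne_top ENNReal.coe_ne_top hB
  have hrest : Tendsto (fun n => ∫⁻ x, g n x - δ * A n x ∂μ) atTop (𝓝 0) := by
    simpa using tendsto_lintegral_of_dominated_convergence (fun x => K * B x)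
      (fun n => (hg n).sub ((hA n).const_mul _))
      (fun n => ae_of_all _ fun x => tsub_le_iff_left.2 (hK n x))
      hKB
      (hlim.mono fun x hx => tendsto_of_tendsto_of_tendsto_of_le_of_le tendsto_const_nhds hx
        (fun _ => bot_le) fun _ => tsub_le_self)
  filter_upwards [hrest.eventually_le_const (ENNReal.half_pos hε.ne')] with n hn
  calc ∫⁻ x, g n x ∂μ ≤ ∫⁻ x, (g n x - δ * A n x) + δ * A n x ∂μ :=
        lintegral_mono fun x => le_tsub_add
    _ = ∫⁻ x, g n x - δ * A n x ∂μ + δ * ∫⁻ x, A n x ∂μ := by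
        rw [lintegral_add_right _ ((hA n).const_mul _), lintegral_const_mul _ (hA n)]
    _ ≤ ε / 2 + ε / 2 := add_le_add hn ((mul_le_mul_right (hAC n) _).trans hδC.le)
    _ = ε := ENNReal.add_halves ε

lemma Measurable.signedRpowDefect {α : Type*} [MeasurableSpace α] {p : ℝ} (hp : 1 < p)
    {f g : α → ℝ} (hf : Measurable f) (hg : Measurable g) :
    Measurable fun x => _root_.signedRpowDefect p (f x) (g x) :=
  (continuous_signedRpowDefect hp).measurable.comp (f := fun x => (f x, g x)) (hf.prodMk hg)

theorem tendsto_lintegral_signedRpowDefect {α : Type*} [MeasurableSpace α] {μ : Measure α}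
    {p : ℝ} (hp : 1 < p) {a : ℕ → α → ℝ} {b : α → ℝ} {C : ℝ≥0∞}
    (ha : ∀ n, Measurable (a n)) (hb : Measurable b)
    (haC : ∀ n, ∫⁻ x, ENNReal.ofReal (|a n x| ^ p) ∂μ ≤ C) (hC : C ≠ ∞)
    (hbfin : ∫⁻ x, ENNReal.ofReal (|b x| ^ p) ∂μ ≠ ∞)
    (ha0 : ∀ᵐ x ∂μ, Tendsto (fun n => a n x) atTop (𝓝 0)) :
    Tendsto (fun n => ∫⁻ x, ENNReal.ofReal
      (|signedRpowDefect p (a n x) (b x)| ^ (p / (p - 1))) ∂μ) atTop (𝓝 0) := by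
  have hp1 : 0 < p - 1 := sub_pos.2 hp
  set G : ℝ × ℝ → ℝ := fun z => |signedRpowDefect p z.1 z.2| ^ (p / (p - 1))
  have hG : Continuous G :=
    (continuous_signedRpowDefect hp).abs.rpow_const fun _ => Or.inr (by positivity)
  have hhom : ∀ l > 0, ∀ a b, G (l * a, l * b) = l ^ p * G (a, b) := fun l hl a b => by
    simp only [G, signedRpowDefect_mul hl, abs_mul, abs_of_pos (Real.rpow_pos_of_pos hl _)]
    rw [Real.mul_rpow (by positivity) (abs_nonneg _), ← Real.rpow_mul hl.le,
      mul_div_cancel₀ _ hp1.ne']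
  refine tendsto_lintegral_zero_of_le_smul_add_smul
    (fun n => ((ha n).signedRpowDefect hp hb).abs.pow_const _ |>.ennreal_ofReal)
    (fun n => ((ha n).abs.pow_const p).ennreal_ofReal) haC hC hbfin (fun ε hε => ?_) ?_
  · obtain ⟨K, hK0, hK⟩ := exists_le_mul_rpow_add_mul_rpow_of_homogeneous hG hhom
      (fun a => by simp [G, Real.zero_rpow (div_pos (by linarith) hp1).ne']) hε
    refine ⟨K.toNNReal, fun n x => ?_⟩
    calc ENNReal.ofReal (G (a n x, b x))
        ≤ ENNReal.ofReal (ε * |a n x| ^ p + K * |b x| ^ p) := ENNReal.ofReal_le_ofReal (hK _ _)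
      _ = ε * ENNReal.ofReal (|a n x| ^ p) + K.toNNReal * ENNReal.ofReal (|b x| ^ p) := by
        rw [ENNReal.ofReal_add (by positivity) (by positivity), ENNReal.ofReal_mul (by positivity),
          ENNReal.ofReal_mul hK0, ENNReal.ofReal_coe_nnreal]
        rfl
  · filter_upwards [ha0] with x hx
    have := ((hG.tendsto (0, b x)).comp (hx.prodMk_nhds tendsto_const_nhds))
    simpa [G, Function.comp_def, Real.zero_rpow (div_pos (by linarith) hp1).ne'] using
      (ENNReal.continuous_ofReal.tendsto _).comp this

def gagliardoQuotient (N : ℕ) (s p : ℝ) (u : Euc N → ℝ) (z : Euc N × Euc N) : ℝ :=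
  (u z.1 - u z.2) / ‖z.1 - z.2‖ ^ (((N : ℝ) + s * p) / p)

section gagliardoQuotient

variable {N : ℕ} {s p : ℝ}

lemma measurable_gagliardoQuotient {u : Euc N → ℝ} (hu : Measurable u) :
    Measurable (gagliardoQuotient N s p u) := by
  unfold gagliardoQuotient
  fun_prop

lemma gagliardoQuotient_add (u v : Euc N → ℝ) (z : Euc N × Euc N) :
    gagliardoQuotient N s p (fun t => u t + v t) z =
      gagliardoQuotient N s p u z + gagliardoQuotient N s p v z := by
  simp only [gagliardoQuotient, ← add_div]
  ring_nf

lemma Aop_eq_signedRpow_gagliardoQuotient (u : Euc N → ℝ) (x y : Euc N) :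
    Aop N s p u x y = signedRpow p (gagliardoQuotient N s p u (x, y)) := by
  rcases eq_or_ne x y with rfl | hxy
  · simp [Aop, gagliardoQuotient]
  have hd : 0 < ‖x - y‖ := norm_pos_iff.2 (sub_ne_zero.2 hxy)
  have hdk := Real.rpow_pos_of_pos hd (((N : ℝ) + s * p) / p)
  simp only [Aop, signedRpow, gagliardoQuotient]
  rw [abs_div, abs_of_pos hdk, Real.div_rpow (abs_nonneg _) hdk.le, div_mul_div_comm,
    ← Real.rpow_mul hd.le, ← Real.rpow_add hd]
  congr 2
  ring

lemma gagliardoP_eq_lintegral_prod (hp : p ≠ 0) {u : Euc N → ℝ} (hu : Measurable u) :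
    gagliardoP N s p u = ∫⁻ z, ENNReal.ofReal (|gagliardoQuotient N s p u z| ^ p)
      ∂(volume.prod volume) := by
  rw [lintegral_prod _
    ((measurable_gagliardoQuotient hu).abs.pow_const p).ennreal_ofReal.aemeasurable]
  refine lintegral_congr fun x => lintegral_congr fun y => ?_
  have hdk : 0 ≤ ‖x - y‖ ^ (((N : ℝ) + s * p) / p) := by positivity
  congr 1
  simp only [gagliardoQuotient]
  rw [abs_div, abs_of_nonneg hdk,
    Real.div_rpow (abs_nonneg _) (by positivity), ← Real.rpow_mul (norm_nonneg _),
    div_mul_cancel₀ _ hp]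

lemma ae_tendsto_gagliardoQuotient {z : ℕ → Euc N → ℝ}
    (hz : ∀ᵐ x, Tendsto (fun n => z n x) atTop (𝓝 0)) :
    ∀ᵐ q ∂(volume.prod volume),
      Tendsto (fun n => gagliardoQuotient N s p (z n) q) atTop (𝓝 0) := by
  filter_upwards [Measure.quasiMeasurePreserving_fst.ae hz,
    Measure.quasiMeasurePreserving_snd.ae hz] with q h1 h2
  simpa [gagliardoQuotient] using
    (h1.sub h2).div_const (‖q.1 - q.2‖ ^ (((N : ℝ) + s * p) / p))

end gagliardoQuotient

theorem stmt_3_general {N : ℕ} {s p : ℝ} (hp : 1 < p)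
    (w : Euc N → ℝ) (hwmeas : Measurable w) (hwfin : gagliardoP N s p w < ⊤)
    (z : ℕ → Euc N → ℝ) (hzmeas : ∀ n, Measurable (z n))
    (C : ℝ≥0∞) (hC : C < ⊤) (hzbd : ∀ n, gagliardoP N s p (z n) ≤ C)
    (hz0 : ∀ᵐ x : Euc N ∂volume, Tendsto (fun n => z n x) atTop (nhds 0)) :
    Tendsto (fun n => ∫⁻ x : Euc N, ∫⁻ y : Euc N,
        ENNReal.ofReal (|Aop N s p (fun t => z n t + w t) x y
            - Aop N s p (z n) x y - Aop N s p w x y| ^ (p / (p - 1))))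
      atTop (nhds 0) := by
  have hp0 : p ≠ 0 := by positivity
  have hD : ∀ {u : Euc N → ℝ}, Measurable u → Measurable (gagliardoQuotient N s p u) :=
    measurable_gagliardoQuotient
  refine (tendsto_lintegral_signedRpowDefect hp (fun n => hD (hzmeas n)) (hD hwmeas)
    (fun n => gagliardoP_eq_lintegral_prod hp0 (hzmeas n) ▸ hzbd n) hC.ne
    (gagliardoP_eq_lintegral_prod hp0 hwmeas ▸ hwfin.ne) (ae_tendsto_gagliardoQuotient hz0)).congr
    fun n => ?_
  rw [lintegral_prod _ (((hD (hzmeas n)).signedRpowDefect hp (hD hwmeas)).abs.pow_const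
    _).ennreal_ofReal.aemeasurable]
  simp only [Aop_eq_signedRpow_gagliardoQuotient, gagliardoQuotient_add, signedRpowDefect]

/-- Brezis–Lieb type splitting for the operator part (Lemma 2.3). -/
theorem stmt_3 {N : ℕ} {s p : ℝ} (hs0 : 0 < s) (hs1 : s < 1) (hp : 1 < p)
    (hN : s * p < (N : ℝ))
    (w : Euc N → ℝ) (hwmeas : Measurable w) (hwfin : gagliardoP N s p w < ⊤)
    (z : ℕ → Euc N → ℝ) (hzmeas : ∀ n, Measurable (z n))
    (C : ℝ≥0∞) (hC : C < ⊤) (hzbd : ∀ n, gagliardoP N s p (z n) ≤ C)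
    (hz0 : ∀ᵐ x : Euc N ∂volume, Tendsto (fun n => z n x) atTop (nhds 0)) :
    Tendsto (fun n => ∫⁻ x : Euc N, ∫⁻ y : Euc N,
        ENNReal.ofReal (|Aop N s p (fun t => z n t + w t) x y
            - Aop N s p (z n) x y - Aop N s p w x y| ^ (p / (p - 1))))
      atTop (nhds 0) :=
  stmt_3_general hp w hwmeas hwfin z hzmeas C hC hzbd hz0
end
end

section
/- Let s ∈ (0,1), p ∈ (1,∞), N > sp, let V : ℝ^N → ℝ be continuous with inf_{ℝ^N} V > 0, and fix ε > 0. Let (u_n) be a sequence with sup_n ‖u_n‖_ε < ∞ and u_n → u almost everywhere in ℝ^N, where ‖u‖_ε < ∞. Then ‖u_n − u‖_ε^p = ‖u_n‖_ε^p − ‖u‖_ε^p + o(1) as n → ∞. -/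
/-!
Both summands of `‖w‖_ε^p` are integrals of `|·|^p`: the Gagliardo term is `∫∫ |w x - w y|^p`
against the measure `|x - y|^{-(N+sp)} dx dy` on `ℝ^N × ℝ^N`, the potential term is `∫ |w|^p`
against `V(εx) dx`, and `u_n → u` a.e. gives `u_n x - u_n y → u x - u y` a.e. on the product.
The claim is therefore the Brezis–Lieb lemma, applied once to each measure.

Brezis–Lieb itself rests on `||a + b|^p - |a|^p| ≤ η |a|^p + C_η |b|^p`. For
`F_n = |f_n|^p - |f_n - f|^p - |f|^p` this gives `|F_n| ≤ η |f_n - f|^p + (C_η + 1) |f|^p`, so the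
positive part of `|F_n| - η |f_n - f|^p` tends to `0` by dominated convergence, and
`limsup ∫ |F_n| ≤ η · sup_n ∫ |f_n - f|^p` for every `η > 0`.
-/

open MeasureTheory Filter Topology
open scoped ENNReal

noncomputable section

/-- The `p`-th power of the norm `‖u‖_ε^p = [u]_{s,p}^p + ∫ V(εx)|u|^p dx`. -/
def normEpsP (N : ℕ) (s p ε : ℝ) (V : Euc N → ℝ) (u : Euc N → ℝ) : ℝ≥0∞ :=
  gagliardoP N s p u + ∫⁻ x : Euc N, ENNReal.ofReal (V (ε • x) * |u x| ^ p)

namespace Real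

lemma rpow_sub_rpow_le_mul_sub {p x y : ℝ} (hp : 1 ≤ p) (hy : 0 ≤ y) (hyx : y ≤ x) :
    x ^ p - y ^ p ≤ p * x ^ (p - 1) * (x - y) := by
  rcases (hy.trans hyx).eq_or_lt with rfl | hx
  · obtain rfl : y = 0 := le_antisymm hyx hy
    simp
  have h := one_add_mul_self_le_rpow_one_add (s := y / x - 1)
    (by linarith [div_nonneg hy hx.le]) hp
  rw [add_sub_cancel, div_rpow hy hx.le, le_div_iff₀ (rpow_pos_of_pos hx p)] at h
  have e : p * x ^ (p - 1) * (x - y) = -(p * (y / x - 1)) * x ^ p := by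
    rw [rpow_sub_one hx.ne']
    field_simp
    ring
  linarith

lemma abs_rpow_sub_rpow_le {p x y : ℝ} (hp : 1 ≤ p) (hx : 0 ≤ x) (hy : 0 ≤ y) :
    |x ^ p - y ^ p| ≤ p * max x y ^ (p - 1) * |x - y| := by
  wlog hyx : y ≤ x generalizing x y
  · rw [abs_sub_comm, max_comm, abs_sub_comm x]
    exact this hy hx (le_of_not_ge hyx)
  rw [abs_of_nonneg (sub_nonneg.2 (rpow_le_rpow hy hyx (by linarith))), max_eq_left hyx,
    abs_of_nonneg (sub_nonneg.2 hyx)]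
  exact rpow_sub_rpow_le_mul_sub hp hy hyx

lemma abs_abs_add_rpow_sub_rpow_le {p : ℝ} (hp : 1 ≤ p) (a b : ℝ) :
    |(|a + b| ^ p - |a| ^ p)| ≤ p * (|a| + |b|) ^ (p - 1) * |b| := by
  refine (abs_rpow_sub_rpow_le hp (abs_nonneg _) (abs_nonneg _)).trans ?_
  have hmax : max |a + b| |a| ≤ |a| + |b| :=
    max_le (abs_add_le a b) (le_add_of_nonneg_right (abs_nonneg b))
  have hdiff : |(|a + b| - |a|)| ≤ |b| := by
    simpa using abs_abs_sub_abs_le_abs_sub (a + b) a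
  have hp1 : 0 ≤ p - 1 := by linarith
  gcongr

lemma mul_rpow_sub_one_mul {p c t : ℝ} (hp : p ≠ 0) (hc : 0 ≤ c) (ht : 0 ≤ t) :
    (c * t) ^ (p - 1) * t = c ^ (p - 1) * t ^ p := by
  rw [mul_rpow hc ht, mul_assoc, ← rpow_add_one' ht (by rwa [sub_add_cancel]), sub_add_cancel]

lemma exists_abs_abs_add_rpow_sub_rpow_le {p ε : ℝ} (hp : 1 ≤ p) (hε : 0 < ε) :
    ∃ C, ∀ a b : ℝ, |(|a + b| ^ p - |a| ^ p)| ≤ ε * |a| ^ p + C * |b| ^ p := by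
  have hp0 : 0 < p := by linarith
  have hp1 : 0 ≤ p - 1 := by linarith
  set δ := min 1 (ε / (p * 2 ^ (p - 1)))
  have hδ0 : 0 < δ := lt_min one_pos (by positivity)
  have hδ1 : δ ≤ 1 := min_le_left _ _
  have hδε : p * 2 ^ (p - 1) * δ ≤ ε :=
    (le_div_iff₀' (by positivity)).1 (min_le_right _ _)
  refine ⟨p * (δ⁻¹ + 1) ^ (p - 1), fun a b => (abs_abs_add_rpow_sub_rpow_le hp a b).trans ?_⟩
  have ha := abs_nonneg a
  have hb := abs_nonneg b
  rcases le_or_gt |b| (δ * |a|) with hba | hab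
  · have hsum : |a| + |b| ≤ 2 * |a| := by nlinarith
    calc p * (|a| + |b|) ^ (p - 1) * |b| ≤ p * (2 * |a|) ^ (p - 1) * (δ * |a|) := by gcongr
      _ = p * 2 ^ (p - 1) * δ * |a| ^ p := by
        rw [mul_comm δ, ← mul_assoc, mul_assoc _ _ |a|, mul_rpow_sub_one_mul hp0.ne' zero_le_two ha]
        ring
      _ ≤ ε * |a| ^ p + p * (δ⁻¹ + 1) ^ (p - 1) * |b| ^ p := by
        have := mul_le_mul_of_nonneg_right hδε (rpow_nonneg ha p)
        have : 0 ≤ p * (δ⁻¹ + 1) ^ (p - 1) * |b| ^ p := by positivity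
        linarith
  · have hsum : |a| + |b| ≤ (δ⁻¹ + 1) * |b| := by
      have := (le_inv_mul_iff₀ hδ0).2 hab.le
      linarith
    calc p * (|a| + |b|) ^ (p - 1) * |b| ≤ p * ((δ⁻¹ + 1) * |b|) ^ (p - 1) * |b| := by gcongr
      _ = p * (δ⁻¹ + 1) ^ (p - 1) * |b| ^ p := by
        rw [mul_assoc, mul_rpow_sub_one_mul hp0.ne' (by positivity) hb]; ring
      _ ≤ ε * |a| ^ p + p * (δ⁻¹ + 1) ^ (p - 1) * |b| ^ p := by
        nlinarith [rpow_nonneg ha p]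

lemma exists_abs_rpow_sub_abs_sub_rpow_sub_rpow_le {p ε : ℝ} (hp : 1 ≤ p) (hε : 0 < ε) :
    ∃ C, ∀ a b : ℝ, |(|a| ^ p - |a - b| ^ p - |b| ^ p)| ≤ ε * |a - b| ^ p + C * |b| ^ p := by
  obtain ⟨C, hC⟩ := exists_abs_abs_add_rpow_sub_rpow_le hp hε
  refine ⟨C + 1, fun a b => ?_⟩
  have h := hC (a - b) b
  rw [sub_add_cancel] at h
  calc |(|a| ^ p - |a - b| ^ p - |b| ^ p)| ≤ |(|a| ^ p - |a - b| ^ p)| + |(|b| ^ p)| := abs_sub _ _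
    _ ≤ ε * |a - b| ^ p + (C + 1) * |b| ^ p := by
      rw [abs_of_nonneg (by positivity : (0 : ℝ) ≤ |b| ^ p)]; linarith

lemma abs_sub_rpow_le {p : ℝ} (hp : 1 ≤ p) (a b : ℝ) :
    |a - b| ^ p ≤ 2 ^ (p - 1) * (|a| ^ p + |b| ^ p) := by
  calc |a - b| ^ p ≤ (|a| + |b|) ^ p := by
        gcongr
        exact abs_sub a b
    _ ≤ 2 ^ (p - 1) * (|a| ^ p + |b| ^ p) := by
      lift |a| to NNReal using abs_nonneg a with x
      lift |b| to NNReal using abs_nonneg b with y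
      exact_mod_cast NNReal.rpow_add_le_mul_rpow_add_rpow x y hp

end Real

namespace MeasureTheory

variable {α : Type*} [MeasurableSpace α] {μ : Measure α}

lemma integrable_abs_rpow_iff_lintegral_lt_top {p : ℝ} {f : α → ℝ}
    (hf : AEStronglyMeasurable f μ) (hp : 0 ≤ p) :
    Integrable (fun x => |f x| ^ p) μ ↔ ∫⁻ x, ENNReal.ofReal (|f x| ^ p) ∂μ < ⊤ :=
  ⟨Integrable.lintegral_lt_top, fun h =>
    ⟨((Real.continuous_rpow_const hp).comp continuous_abs).comp_aestronglyMeasurable hf,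
      (hasFiniteIntegral_iff_ofReal (ae_of_all _ fun _ => by positivity)).2 h⟩⟩

lemma Integrable.abs_sub_rpow {p : ℝ} (hp : 1 ≤ p) {f g : α → ℝ}
    (hf : AEStronglyMeasurable f μ) (hg : AEStronglyMeasurable g μ)
    (hfp : Integrable (fun x => |f x| ^ p) μ) (hgp : Integrable (fun x => |g x| ^ p) μ) :
    Integrable (fun x => |f x - g x| ^ p) μ := by
  refine ((hfp.add hgp).const_mul (2 ^ (p - 1))).mono' ?_ (ae_of_all _ fun x => ?_)
  · exact ((Real.continuous_rpow_const (by linarith)).comp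
      continuous_abs).comp_aestronglyMeasurable (hf.sub hg)
  · rw [Real.norm_of_nonneg (by positivity)]
    exact Real.abs_sub_rpow_le hp _ _

lemma lintegral_ofReal_abs_sub_rpow_ne_top {p : ℝ} (hp : 1 ≤ p) {f g : α → ℝ}
    (hf : AEStronglyMeasurable f μ) (hg : AEStronglyMeasurable g μ)
    (hfp : ∫⁻ x, ENNReal.ofReal (|f x| ^ p) ∂μ ≠ ⊤)
    (hgp : ∫⁻ x, ENNReal.ofReal (|g x| ^ p) ∂μ ≠ ⊤) :
    ∫⁻ x, ENNReal.ofReal (|f x - g x| ^ p) ∂μ ≠ ⊤ := by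
  have hp0 : 0 ≤ p := by linarith
  rw [← lt_top_iff_ne_top,
    ← integrable_abs_rpow_iff_lintegral_lt_top (f := fun x => f x - g x) (hf.sub hg) hp0]
  exact Integrable.abs_sub_rpow hp hf hg
    ((integrable_abs_rpow_iff_lintegral_lt_top hf hp0).2 hfp.lt_top)
    ((integrable_abs_rpow_iff_lintegral_lt_top hg hp0).2 hgp.lt_top)

lemma tendsto_integral_max_abs_sub_zero {F h : ℕ → α → ℝ} {k : α → ℝ}
    (hF : ∀ n, AEStronglyMeasurable (F n) μ) (hh : ∀ n, AEStronglyMeasurable (h n) μ)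
    (hh0 : ∀ n x, 0 ≤ h n x) (hk : Integrable k μ) (hdom : ∀ n x, |F n x| ≤ h n x + k x)
    (hlim : ∀ᵐ x ∂μ, Tendsto (fun n => F n x) atTop (𝓝 0)) :
    Tendsto (fun n => ∫ x, max (|F n x| - h n x) 0 ∂μ) atTop (𝓝 0) := by
  have hlim' : ∀ᵐ x ∂μ, Tendsto (fun n => max (|F n x| - h n x) 0) atTop (𝓝 0) := by
    filter_upwards [hlim] with x hx
    refine squeeze_zero (g := fun n => |F n x|) (fun n => le_max_right _ _)
      (fun n => max_le ?_ (abs_nonneg _)) ?_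
    · linarith [hh0 n x]
    · simpa using hx.abs
  simpa using tendsto_integral_of_dominated_convergence (F := fun n x => max (|F n x| - h n x) 0)
    (fun x => |k x|)
    (fun n => ((continuous_abs.comp_aestronglyMeasurable (hF n)).sub (hh n)).sup
      aestronglyMeasurable_const) hk.abs
    (fun n => ae_of_all _ fun x => by
      rw [Real.norm_of_nonneg (le_max_right _ _)]
      exact max_le (by linarith [hdom n x, le_abs_self (k x)]) (abs_nonneg _))
    hlim'

lemma tendsto_integral_abs_of_forall_dominated {F h : ℕ → α → ℝ} {M : ℝ}
    (hF : ∀ n, Integrable (F n) μ) (hh : ∀ n, Integrable (h n) μ) (hh0 : ∀ n x, 0 ≤ h n x)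
    (hM : ∀ n, ∫ x, h n x ∂μ ≤ M)
    (hdom : ∀ η > 0, ∃ k, Integrable k μ ∧ ∀ n x, |F n x| ≤ η * h n x + k x)
    (hlim : ∀ᵐ x ∂μ, Tendsto (fun n => F n x) atTop (𝓝 0)) :
    Tendsto (fun n => ∫ x, |F n x| ∂μ) atTop (𝓝 0) := by
  refine tendsto_order.2 ⟨fun a ha => Eventually.of_forall fun n =>
    ha.trans_le (integral_nonneg fun _ => abs_nonneg _), fun a ha => ?_⟩
  set η := a / (2 * (|M| + 1))
  have hη : 0 < η := by positivity
  have hηM : η * M ≤ a / 2 := by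
    calc η * M ≤ η * (|M| + 1) := by gcongr; linarith [le_abs_self M]
      _ = a / 2 := by unfold η; field_simp
  obtain ⟨k, hk, hFk⟩ := hdom η hη
  have hηh : ∀ n, Integrable (fun x => η * h n x) μ := fun n => (hh n).const_mul η
  have hW := tendsto_integral_max_abs_sub_zero (fun n => (hF n).1) (fun n => (hηh n).1)
    (fun n x => mul_nonneg hη.le (hh0 n x)) hk hFk hlim
  filter_upwards [hW.eventually (gt_mem_nhds (half_pos ha))] with n hn
  calc ∫ x, |F n x| ∂μ ≤ ∫ x, (max (|F n x| - η * h n x) 0 + η * h n x) ∂μ :=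
        integral_mono (hF n).abs (((hF n).abs.sub (hηh n)).pos_part.add (hηh n))
          fun x => by linarith [le_max_left (|F n x| - η * h n x) 0]
    _ = ∫ x, max (|F n x| - η * h n x) 0 ∂μ + η * ∫ x, h n x ∂μ := by
        rw [integral_add (f := fun x => max (|F n x| - η * h n x) 0)
          ((hF n).abs.sub (hηh n)).pos_part (hηh n), integral_const_mul]
    _ < a := by linarith [mul_le_mul_of_nonneg_left (hM n) hη.le]

theorem tendsto_integral_abs_sub_rpow_sub {p : ℝ} (hp : 1 ≤ p) {f : ℕ → α → ℝ} {g : α → ℝ}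
    {C : ℝ} (hf : ∀ n, AEStronglyMeasurable (f n) μ) (hg : AEStronglyMeasurable g μ)
    (hfp : ∀ n, Integrable (fun x => |f n x| ^ p) μ) (hfC : ∀ n, ∫ x, |f n x| ^ p ∂μ ≤ C)
    (hgp : Integrable (fun x => |g x| ^ p) μ)
    (hlim : ∀ᵐ x ∂μ, Tendsto (fun n => f n x) atTop (𝓝 (g x))) :
    Tendsto (fun n => ∫ x, |f n x - g x| ^ p ∂μ - (∫ x, |f n x| ^ p ∂μ - ∫ x, |g x| ^ p ∂μ))
      atTop (𝓝 0) := by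
  have hdp : ∀ n, Integrable (fun x => |f n x - g x| ^ p) μ :=
    fun n => (hfp n).abs_sub_rpow hp (hf n) hg hgp
  set F : ℕ → α → ℝ := fun n x => |f n x| ^ p - |f n x - g x| ^ p - |g x| ^ p
  have hF : ∀ n, Integrable (F n) μ := fun n => ((hfp n).sub (hdp n)).sub hgp
  have hdpC : ∀ n, ∫ x, |f n x - g x| ^ p ∂μ ≤ 2 ^ (p - 1) * (C + ∫ x, |g x| ^ p ∂μ) := by
    intro n
    calc ∫ x, |f n x - g x| ^ p ∂μ ≤ ∫ x, 2 ^ (p - 1) * (|f n x| ^ p + |g x| ^ p) ∂μ :=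
          integral_mono (hdp n) (((hfp n).add hgp).const_mul _)
            fun x => Real.abs_sub_rpow_le hp _ _
      _ = 2 ^ (p - 1) * (∫ x, |f n x| ^ p ∂μ + ∫ x, |g x| ^ p ∂μ) := by
          rw [integral_const_mul, integral_add (hfp n) hgp]
      _ ≤ 2 ^ (p - 1) * (C + ∫ x, |g x| ^ p ∂μ) := by grw [hfC n]
  have hFdom : ∀ η > 0, ∃ k, Integrable k μ ∧ ∀ n x, |F n x| ≤ η * |f n x - g x| ^ p + k x := by
    intro η hη
    obtain ⟨C', hC'⟩ := Real.exists_abs_rpow_sub_abs_sub_rpow_sub_rpow_le hp hη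
    exact ⟨fun x => C' * |g x| ^ p, hgp.const_mul _, fun n x => hC' (f n x) (g x)⟩
  have hFlim : ∀ᵐ x ∂μ, Tendsto (fun n => F n x) atTop (𝓝 0) := by
    filter_upwards [hlim] with x hx
    have hc : Continuous fun t : ℝ => |t| ^ p :=
      (Real.continuous_rpow_const (by linarith)).comp continuous_abs
    have hfx := (hc.tendsto _).comp hx
    have hdx := (hc.tendsto _).comp (hx.sub_const (g x))
    simpa [F, Real.zero_rpow (by linarith : p ≠ 0)] using (hfx.sub hdx).sub_const (|g x| ^ p)
  refine squeeze_zero_norm (fun n => ?_) (tendsto_integral_abs_of_forall_dominated hF hdp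
    (fun n x => by positivity) hdpC hFdom hFlim)
  have hint : ∫ x, F n x ∂μ
      = ∫ x, |f n x| ^ p ∂μ - ∫ x, |f n x - g x| ^ p ∂μ - ∫ x, |g x| ^ p ∂μ := by
    rw [integral_sub (f := fun x => |f n x| ^ p - |f n x - g x| ^ p) ((hfp n).sub (hdp n)) hgp,
      integral_sub (hfp n) (hdp n)]
  calc ‖∫ x, |f n x - g x| ^ p ∂μ - (∫ x, |f n x| ^ p ∂μ - ∫ x, |g x| ^ p ∂μ)‖
      = |∫ x, F n x ∂μ| := by rw [hint, Real.norm_eq_abs, ← abs_neg]; ring_nf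
    _ ≤ ∫ x, |F n x| ∂μ := abs_integral_le_integral_abs

theorem tendsto_toReal_lintegral_abs_sub_rpow_sub {p : ℝ} (hp : 1 ≤ p) {f : ℕ → α → ℝ}
    {g : α → ℝ} {C : ℝ≥0∞} (hf : ∀ n, AEStronglyMeasurable (f n) μ)
    (hg : AEStronglyMeasurable g μ) (hC : C ≠ ⊤)
    (hfC : ∀ n, ∫⁻ x, ENNReal.ofReal (|f n x| ^ p) ∂μ ≤ C)
    (hgp : ∫⁻ x, ENNReal.ofReal (|g x| ^ p) ∂μ ≠ ⊤)
    (hlim : ∀ᵐ x ∂μ, Tendsto (fun n => f n x) atTop (𝓝 (g x))) :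
    Tendsto (fun n => (∫⁻ x, ENNReal.ofReal (|f n x - g x| ^ p) ∂μ).toReal
      - ((∫⁻ x, ENNReal.ofReal (|f n x| ^ p) ∂μ).toReal
        - (∫⁻ x, ENNReal.ofReal (|g x| ^ p) ∂μ).toReal)) atTop (𝓝 0) := by
  have hp0 : 0 ≤ p := by linarith
  have htoReal {w : α → ℝ} (hw : AEStronglyMeasurable w μ) :
      (∫⁻ x, ENNReal.ofReal (|w x| ^ p) ∂μ).toReal = ∫ x, |w x| ^ p ∂μ :=
    (integral_eq_lintegral_of_nonneg_ae (ae_of_all _ fun x => Real.rpow_nonneg (abs_nonneg _) p)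
      (((Real.continuous_rpow_const hp0).comp continuous_abs).comp_aestronglyMeasurable hw)).symm
  refine (tendsto_integral_abs_sub_rpow_sub hp hf hg (C := C.toReal)
    (fun n => (integrable_abs_rpow_iff_lintegral_lt_top (hf n) hp0).2
      ((hfC n).trans_lt hC.lt_top))
    (fun n => htoReal (hf n) ▸ ENNReal.toReal_mono hC (hfC n))
    ((integrable_abs_rpow_iff_lintegral_lt_top hg hp0).2 hgp.lt_top) hlim).congr fun n => ?_
  rw [htoReal (hf n), htoReal hg, htoReal (w := fun x => f n x - g x) ((hf n).sub hg)]

lemma ae_prod_tendsto_sub [SFinite μ] {u : ℕ → α → ℝ} {v : α → ℝ}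
    (h : ∀ᵐ x ∂μ, Tendsto (fun n => u n x) atTop (𝓝 (v x))) :
    ∀ᵐ z ∂μ.prod μ, Tendsto (fun n => u n z.1 - u n z.2) atTop (𝓝 (v z.1 - v z.2)) := by
  filter_upwards [Measure.quasiMeasurePreserving_fst.ae h,
    Measure.quasiMeasurePreserving_snd.ae h] with z h₁ h₂
  exact h₁.sub h₂

lemma lintegral_ofReal_mul_eq_lintegral_withDensity {w φ : α → ℝ} (hw : Measurable w)
    (hφ : Measurable φ) (hφ0 : ∀ x, 0 ≤ φ x) :
    ∫⁻ x, ENNReal.ofReal (w x * φ x) ∂μ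
      = ∫⁻ x, ENNReal.ofReal (φ x) ∂μ.withDensity fun x => ENNReal.ofReal (w x) := by
  rw [lintegral_withDensity_eq_lintegral_mul _
    (by fun_prop : Measurable fun x => ENNReal.ofReal (w x))
    (by fun_prop : Measurable fun x => ENNReal.ofReal (φ x))]
  exact lintegral_congr fun x => ENNReal.ofReal_mul' (hφ0 x)

end MeasureTheory

def gagliardoMeasure (N : ℕ) (E : ℝ) : Measure (Euc N × Euc N) :=
  (volume.prod volume).withDensity fun z => ENNReal.ofReal ((‖z.1 - z.2‖ ^ E)⁻¹)

def weightedVolume (N : ℕ) (ε : ℝ) (V : Euc N → ℝ) : Measure (Euc N) :=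
  volume.withDensity fun x => ENNReal.ofReal (V (ε • x))

section NormEps

variable {N : ℕ} {s p ε : ℝ} {V : Euc N → ℝ}

lemma gagliardoP_eq_lintegral {w : Euc N → ℝ} (hw : Measurable w) :
    gagliardoP N s p w
      = ∫⁻ z, ENNReal.ofReal (|w z.1 - w z.2| ^ p) ∂gagliardoMeasure N (N + s * p) := by
  rw [gagliardoP, gagliardoMeasure, ← lintegral_ofReal_mul_eq_lintegral_withDensity (by fun_prop)
    (by fun_prop) (fun _ => by positivity), lintegral_prod _ (by fun_prop)]
  simp_rw [div_eq_inv_mul]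

lemma normEpsP_eq (hV : Measurable V) {w : Euc N → ℝ} (hw : Measurable w) :
    normEpsP N s p ε V w
      = ∫⁻ z, ENNReal.ofReal (|w z.1 - w z.2| ^ p) ∂gagliardoMeasure N (N + s * p)
        + ∫⁻ x, ENNReal.ofReal (|w x| ^ p) ∂weightedVolume N ε V := by
  rw [normEpsP, gagliardoP_eq_lintegral hw, weightedVolume,
    lintegral_ofReal_mul_eq_lintegral_withDensity (by fun_prop) (by fun_prop)
      (fun _ => by positivity)]

lemma normEpsP_sub_eq (hV : Measurable V) {u v : Euc N → ℝ} (hu : Measurable u)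
    (hv : Measurable v) :
    normEpsP N s p ε V (fun x => u x - v x)
      = ∫⁻ z, ENNReal.ofReal (|(u z.1 - u z.2) - (v z.1 - v z.2)| ^ p)
          ∂gagliardoMeasure N (N + s * p)
        + ∫⁻ x, ENNReal.ofReal (|u x - v x| ^ p) ∂weightedVolume N ε V := by
  rw [normEpsP_eq (w := fun x => u x - v x) hV (hu.sub hv)]
  simp only [sub_sub_sub_comm (u _) (v _)]

lemma normEpsP_sub_ne_top (hp : 1 ≤ p) (hV : Measurable V) {u v : Euc N → ℝ}
    (hu : Measurable u) (hv : Measurable v) (hu' : normEpsP N s p ε V u ≠ ⊤)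
    (hv' : normEpsP N s p ε V v ≠ ⊤) :
    normEpsP N s p ε V (fun x => u x - v x) ≠ ⊤ := by
  rw [normEpsP_eq hV hu, ENNReal.add_ne_top] at hu'
  rw [normEpsP_eq hV hv, ENNReal.add_ne_top] at hv'
  rw [normEpsP_sub_eq hV hu hv, ENNReal.add_ne_top]
  exact ⟨lintegral_ofReal_abs_sub_rpow_ne_top hp (by fun_prop) (by fun_prop) hu'.1 hv'.1,
    lintegral_ofReal_abs_sub_rpow_ne_top hp (by fun_prop) (by fun_prop) hu'.2 hv'.2⟩

end NormEps

theorem stmt_4_general {N : ℕ} {s p : ℝ} (hp : 1 < p)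
    (V : Euc N → ℝ) (hVc : Continuous V)
    (ε : ℝ)
    (u : ℕ → Euc N → ℝ) (hmeas : ∀ n, Measurable (u n))
    (hbdd : (⨆ n, normEpsP N s p ε V (u n)) < ⊤)
    (v : Euc N → ℝ) (hvmeas : Measurable v)
    (hvfin : normEpsP N s p ε V v < ⊤)
    (hae : ∀ᵐ x : Euc N ∂volume, Tendsto (fun n => u n x) atTop (nhds (v x))) :
    Tendsto (fun n => (normEpsP N s p ε V (fun x => u n x - v x)).toReal
        - ((normEpsP N s p ε V (u n)).toReal - (normEpsP N s p ε V v).toReal))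
      atTop (nhds 0) := by
  have hV := hVc.measurable
  have hu n : normEpsP N s p ε V (u n) ≤ ⨆ n, normEpsP N s p ε V (u n) :=
    le_iSup (fun n => normEpsP N s p ε V (u n)) n
  have hG := tendsto_toReal_lintegral_abs_sub_rpow_sub (μ := gagliardoMeasure N (N + s * p))
    hp.le (f := fun n z => u n z.1 - u n z.2) (g := fun z => v z.1 - v z.2)
    (fun n => by fun_prop) (by fun_prop) hbdd.ne
    (fun n => le_self_add.trans ((normEpsP_eq hV (hmeas n)).ge.trans (hu n)))
    (ne_top_of_le_ne_top hvfin.ne (le_self_add.trans (normEpsP_eq hV hvmeas).ge))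
    ((withDensity_absolutelyContinuous _ _).ae_le (ae_prod_tendsto_sub hae))
  have hL := tendsto_toReal_lintegral_abs_sub_rpow_sub (μ := weightedVolume N ε V) hp.le
    (fun n => (hmeas n).aestronglyMeasurable) hvmeas.aestronglyMeasurable hbdd.ne
    (fun n => le_add_self.trans ((normEpsP_eq hV (hmeas n)).ge.trans (hu n)))
    (ne_top_of_le_ne_top hvfin.ne (le_add_self.trans (normEpsP_eq hV hvmeas).ge))
    ((withDensity_absolutelyContinuous _ _).ae_le hae)
  have hfin n : normEpsP N s p ε V (u n) ≠ ⊤ := ne_top_of_le_ne_top hbdd.ne (hu n)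
  have toReal_split {a b c : ℝ≥0∞} (h : c = a + b) (hc : c ≠ ⊤) :
      c.toReal = a.toReal + b.toReal := by
    rw [h, ENNReal.add_ne_top] at *
    exact ENNReal.toReal_add hc.1 hc.2
  refine (add_zero (0 : ℝ) ▸ hG.add hL).congr fun n => ?_
  rw [toReal_split (normEpsP_sub_eq hV (hmeas n) hvmeas)
      (normEpsP_sub_ne_top hp.le hV (hmeas n) hvmeas (hfin n) hvfin.ne),
    toReal_split (normEpsP_eq hV (hmeas n)) (hfin n),
    toReal_split (normEpsP_eq hV hvmeas) hvfin.ne]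
  ring

/-- Brezis–Lieb splitting for the `‖·‖_ε` norm (Lemma 2.4):
`‖u_n − u‖_ε^p = ‖u_n‖_ε^p − ‖u‖_ε^p + o(1)`. -/
theorem stmt_4 {N : ℕ} {s p : ℝ} (hs0 : 0 < s) (hs1 : s < 1) (hp : 1 < p)
    (hN : s * p < (N : ℝ))
    (V : Euc N → ℝ) (hVc : Continuous V)
    (V₀ : ℝ) (hV₀ : 0 < V₀) (hVlb : ∀ x, V₀ ≤ V x)
    (ε : ℝ) (hε : 0 < ε)
    (u : ℕ → Euc N → ℝ) (hmeas : ∀ n, Measurable (u n))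
    (hbdd : (⨆ n, normEpsP N s p ε V (u n)) < ⊤)
    (v : Euc N → ℝ) (hvmeas : Measurable v)
    (hvfin : normEpsP N s p ε V v < ⊤)
    (hae : ∀ᵐ x : Euc N ∂volume, Tendsto (fun n => u n x) atTop (nhds (v x))) :
    Tendsto (fun n => (normEpsP N s p ε V (fun x => u n x - v x)).toReal
        - ((normEpsP N s p ε V (u n)).toReal - (normEpsP N s p ε V v).toReal))
      atTop (nhds 0) :=
  stmt_4_general hp V hVc ε u hmeas hbdd v hvmeas hvfin hae
end
end
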